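/- arXiv:0901.2597 — 3 statements merged into one kernel-verified Lean document; each statement's English description precedes it below -/
import Mathlib

section
/- Let α = (α_i)_{i≥0} and β = (β_i)_{i≥0} be two sequences of complex numbers with α_0 = β_0. Then for every positive integer n, the generalized Pascal triangle satisfies the factorization P_{α,β}(n) = L(n) · T_{α̂,β̂}(n) · U(n), where L(n) is the n×n lower triangular matrix with entries L_{i,j} = binomial(i,j) for i ≥ j and 0 otherwise, U(n) = L(n)^t, and α̂, β̂ are the binomial inverse transforms of α, β. -/
open Matrix

/-- Entry `P_{i,j}` of the generalized Pascal triangle associated to sequences `α`, `β`: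
`P_{i,0} = α i`, `P_{0,j} = β j`, and `P_{i,j} = P_{i-1,j} + P_{i,j-1}` for `i, j ≥ 1`. -/
def pascalEntry {R : Type*} [CommRing R] (α β : ℕ → R) : ℕ → ℕ → R
  | i, 0 => α i
  | 0, j + 1 => β (j + 1)
  | i + 1, j + 1 => pascalEntry α β i (j + 1) + pascalEntry α β (i + 1) j

/-- The generalized Pascal triangle `P_{α,β}(n)`. -/
def genPascal {R : Type*} [CommRing R] (α β : ℕ → R) (n : ℕ) :
    Matrix (Fin n) (Fin n) R :=
  Matrix.of fun i j => pascalEntry α β (i : ℕ) (j : ℕ)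

/-- The Töplitz matrix `T_{α,β}(n)`: `t_{i,j} = α_{i-j}` if `i ≥ j`, else `β_{j-i}`. -/
def toeplitz {R : Type*} [CommRing R] (α β : ℕ → R) (n : ℕ) :
    Matrix (Fin n) (Fin n) R :=
  Matrix.of fun i j => if (j : ℕ) ≤ (i : ℕ) then α ((i : ℕ) - (j : ℕ)) else β ((j : ℕ) - (i : ℕ))

/-- The unipotent lower triangular matrix `L(n)` with `L_{i,j} = C(i,j)` for `i ≥ j`. -/
def lowerL (R : Type*) [CommRing R] (n : ℕ) : Matrix (Fin n) (Fin n) R :=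
  Matrix.of fun i j => if (j : ℕ) ≤ (i : ℕ) then ((i : ℕ).choose (j : ℕ) : R) else 0

/-- The binomial inverse transform `α̂_i = ∑_{k=0}^{i} (-1)^{i+k} C(i,k) α_k`. -/
def hatSeq {R : Type*} [CommRing R] (α : ℕ → R) (i : ℕ) : R :=
  ∑ k ∈ Finset.range (i + 1), (-1 : R) ^ (i + k) * (i.choose k : R) * α k

/-- The binomial transform `α̌_i = ∑_{k=0}^{i} C(i,k) α_k`. -/
def checkSeq {R : Type*} [CommRing R] (α : ℕ → R) (i : ℕ) : R :=
  ∑ k ∈ Finset.range (i + 1), (i.choose k : R) * α k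

/-!
`α̂_k` is the `k`-th forward difference of `α` at `0`, so the Gregory–Newton formula says that the
binomial transform `checkSeq` inverts `hatSeq`. The entry `(i, j)` of `L T Lᵀ` is the double
binomial transform `∑ₖ ∑ₗ C(i,k) C(j,l) t(k,l)` of the Töplitz kernel `t`. Pascal's rule for
`C(i+1,k)` and the invariance of `t` under `(k,l) ↦ (k+1,l+1)` make these entries obey the Pascal
recurrence, and on the boundary row and column they are single binomial transforms of `α̂` and
`β̂`, i.e. `α` and `β`.
-/

open Finset fwdDiff

def toeplitzKernel {R : Type*} (a b : ℕ → R) (k l : ℕ) : R :=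
  if l ≤ k then a (k - l) else b (l - k)

theorem toeplitzKernel_succ_succ {R : Type*} (a b : ℕ → R) (k l : ℕ) :
    toeplitzKernel a b (k + 1) (l + 1) = toeplitzKernel a b k l := by
  simp [toeplitzKernel]

section

variable {R : Type*} [CommRing R]

theorem hatSeq_eq_fwdDiff_iter (α : ℕ → R) (i : ℕ) : hatSeq α i = (Δ_[1])^[i] α 0 := by
  rw [fwdDiff_iter_eq_sum_shift, hatSeq]
  refine sum_congr rfl fun k hk => ?_
  have hki : i + k = (i - k) + 2 * k := by have := mem_range.1 hk; omega
  rw [hki, pow_add, pow_mul, neg_one_sq, one_pow, mul_one, zero_add, smul_eq_mul, mul_one,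
    zsmul_eq_mul]
  push_cast
  ring

theorem checkSeq_hatSeq (α : ℕ → R) : checkSeq (hatSeq α) = α := by
  funext i
  simpa [checkSeq, hatSeq_eq_fwdDiff_iter, nsmul_eq_mul] using
    (shift_eq_sum_fwdDiff_iter 1 α i 0).symm

theorem checkSeq_add (f g : ℕ → R) (i : ℕ) :
    checkSeq (f + g) i = checkSeq f i + checkSeq g i := by
  simp only [checkSeq, Pi.add_apply, mul_add, sum_add_distrib]

theorem checkSeq_succ (f : ℕ → R) (i : ℕ) :
    checkSeq f (i + 1) = checkSeq f i + checkSeq (fun k => f (k + 1)) i :=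
  sum_choose_succ_mul (fun k _ => f k) i

theorem pascalEntry_eq_of_rec {α β : ℕ → R} (Q : ℕ → ℕ → R) (hα : ∀ i, Q i 0 = α i)
    (hβ : ∀ j, Q 0 (j + 1) = β (j + 1))
    (hrec : ∀ i j, Q (i + 1) (j + 1) = Q i (j + 1) + Q (i + 1) j) :
    pascalEntry α β = Q := by
  funext i j
  induction i generalizing j with
  | zero => cases j <;> simp [pascalEntry, hα, hβ]
  | succ i ih =>
    induction j with
    | zero => simp [pascalEntry, hα]
    | succ j ihj => rw [pascalEntry, ih, ihj, hrec]

def binomialTransform₂ (τ : ℕ → ℕ → R) (i j : ℕ) : R :=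
  checkSeq (fun l => checkSeq (fun k => τ k l) i) j

theorem binomialTransform₂_succ_succ {τ : ℕ → ℕ → R} (hτ : ∀ k l, τ (k + 1) (l + 1) = τ k l)
    (i j : ℕ) :
    binomialTransform₂ τ (i + 1) (j + 1) =
      binomialTransform₂ τ i (j + 1) + binomialTransform₂ τ (i + 1) j := by
  have hcol : (fun l => checkSeq (fun k => τ k (l + 1)) (i + 1)) =
      (fun l => checkSeq (fun k => τ k (l + 1)) i) + fun l => checkSeq (fun k => τ k l) i := by
    funext l
    simp only [checkSeq_succ _ i, hτ, Pi.add_apply]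
  simp only [binomialTransform₂]
  rw [checkSeq_succ _ j, hcol, checkSeq_add, checkSeq_succ (fun l => checkSeq _ i) j]
  ring

theorem pascalEntry_eq_binomialTransform₂ {α β : ℕ → R} {τ : ℕ → ℕ → R}
    (hτ : ∀ k l, τ (k + 1) (l + 1) = τ k l) (hα : checkSeq (fun k => τ k 0) = α)
    (hβ : checkSeq (τ 0) = β) : pascalEntry α β = binomialTransform₂ τ :=
  pascalEntry_eq_of_rec _ (fun i => by simp [binomialTransform₂, checkSeq, ← hα])
    (fun j => by simp [binomialTransform₂, checkSeq, ← hβ]) (binomialTransform₂_succ_succ hτ)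

theorem toeplitz_apply (a b : ℕ → R) {n : ℕ} (k l : Fin n) :
    toeplitz a b n k l = toeplitzKernel a b k l :=
  rfl

theorem lowerL_apply {n : ℕ} (i j : Fin n) : lowerL R n i j = ((i : ℕ).choose j : R) := by
  rw [lowerL, of_apply, ite_eq_left_iff, not_le]
  intro hij
  rw [Nat.choose_eq_zero_of_lt hij, Nat.cast_zero]

theorem sum_lowerL_mul {n : ℕ} (i : Fin n) (f : ℕ → R) :
    ∑ k : Fin n, lowerL R n i k * f k = checkSeq f i := by
  simp only [lowerL_apply]
  rw [Fin.sum_univ_eq_sum_range (fun k => ((i : ℕ).choose k : R) * f k), checkSeq]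
  refine (sum_subset (range_subset_range.2 i.isLt) fun k _ hk => ?_).symm
  rw [Nat.choose_eq_zero_of_lt (by simpa using hk), Nat.cast_zero, zero_mul]

theorem lowerL_mul_toeplitz_mul_transpose_apply {n : ℕ} (a b : ℕ → R) (i j : Fin n) :
    (lowerL R n * toeplitz a b n * (lowerL R n)ᵀ) i j =
      binomialTransform₂ (toeplitzKernel a b) i j := by
  simp only [mul_apply, transpose_apply, mul_comm _ (lowerL R n j _)]
  simp only [toeplitz_apply]
  rw [sum_congr rfl fun l _ => by rw [sum_lowerL_mul i fun k => toeplitzKernel a b k l]]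
  exact sum_lowerL_mul j fun l => checkSeq (fun k => toeplitzKernel a b k l) i

end

theorem genPascal_factorization_general (α β : ℕ → ℂ) (h : α 0 = β 0) (n : ℕ) :
    genPascal α β n = lowerL ℂ n * toeplitz (hatSeq α) (hatSeq β) n * (lowerL ℂ n)ᵀ := by
  have hkernel_row : toeplitzKernel (hatSeq α) (hatSeq β) 0 = hatSeq β := by
    funext l
    cases l <;> simp [toeplitzKernel, hatSeq, h]
  ext i j
  rw [lowerL_mul_toeplitz_mul_transpose_apply, genPascal, of_apply,
    pascalEntry_eq_binomialTransform₂ (τ := toeplitzKernel (hatSeq α) (hatSeq β))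
      (toeplitzKernel_succ_succ _ _) (by simp [toeplitzKernel, checkSeq_hatSeq])
      (by rw [hkernel_row, checkSeq_hatSeq])]

/-- `P_{α,β}(n) = L(n) · T_{α̂,β̂}(n) · U(n)` where `U(n) = L(n)ᵀ`. -/
theorem genPascal_factorization (α β : ℕ → ℂ) (h : α 0 = β 0) (n : ℕ) (hn : 0 < n) :
    genPascal α β n = lowerL ℂ n * toeplitz (hatSeq α) (hatSeq β) n * (lowerL ℂ n)ᵀ :=
  genPascal_factorization_general α β h n
end

section
/- Let ρ and σ be complex numbers and let α = (α_i)_{i≥0} and β = (β_j)_{j≥0} be the geometric sequences with α_i = ρ^i and β_j = σ^j. Then for every positive integer n, det(P_{α,β}(n)) = (ρ + σ - ρσ)^{n-1}. -/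
open Matrix

namespace PascalGeomAux

/-- The parametrized matrix `R(n;x)_{i,j} = P_{i,j} - x ρ^i σ^j`. -/
noncomputable def Rm (ρ σ x : ℂ) (n : ℕ) : Matrix (Fin n) (Fin n) ℂ :=
  Matrix.of fun i j =>
    pascalEntry (fun i => ρ ^ i) (fun j => σ ^ j) (i : ℕ) (j : ℕ) - x * ρ ^ (i : ℕ) * σ ^ (j : ℕ)

noncomputable def Bmat (n : ℕ) : Matrix (Fin (n+1)) (Fin (n+1)) ℂ :=
  Matrix.of fun i j => if i = j then 1 else if (i : ℕ) = (j : ℕ) + 1 then -1 else 0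

noncomputable def Cmat (ρ : ℂ) (n : ℕ) : Matrix (Fin (n+1)) (Fin (n+1)) ℂ :=
  Matrix.of fun i j => if i = j then 1 else if (j : ℕ) = 0 then -(ρ ^ ((i : ℕ) - 1) * (ρ - 1)) else 0

lemma Bmat_det (n : ℕ) : (Bmat n).det = 1 := by
  rw [Matrix.det_of_lowerTriangular (Bmat n)]
  · simp [Bmat]
  · intro i j hij
    have h : (i : ℕ) < (j : ℕ) := hij
    simp only [Bmat, Matrix.of_apply]
    rw [if_neg (by intro e; rw [e] at h; omega), if_neg (by omega)]

lemma Cmat_det (ρ : ℂ) (n : ℕ) : (Cmat ρ n).det = 1 := by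
  rw [Matrix.det_of_lowerTriangular (Cmat ρ n)]
  · simp [Cmat]
  · intro i j hij
    have h : (i : ℕ) < (j : ℕ) := hij
    simp only [Cmat, Matrix.of_apply]
    rw [if_neg (by intro e; rw [e] at h; omega), if_neg (by omega)]

lemma sum_if_pred {n : ℕ} (i' : Fin n) (f : Fin (n+1) → ℂ) :
    ∑ k : Fin (n+1), (if ((i'.succ : Fin (n+1)) : ℕ) = (k : ℕ) + 1 then f k else 0)
      = f i'.castSucc := by
  rw [Finset.sum_eq_single i'.castSucc]
  · simp
  · intro k _ hk
    rw [if_neg]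
    intro e
    apply hk
    apply Fin.ext
    simp only [Fin.val_succ] at e
    simp only [Fin.coe_castSucc]
    omega
  · intro h; exact absurd (Finset.mem_univ _) h

lemma sum_if_zero_aux {n : ℕ} (f : Fin (n+1) → ℂ) :
    ∑ k : Fin (n+1), (if ((0 : Fin (n+1)) : ℕ) = (k : ℕ) + 1 then f k else 0) = 0 := by
  apply Finset.sum_eq_zero
  intro k _
  rw [if_neg]
  simp

lemma sum_if_eq {n : ℕ} (t : Fin n) (f : Fin n → ℂ) :
    ∑ k, (if t = k then f k else 0) = f t := by simp

lemma Bsplit (n : ℕ) (i k : Fin (n+1)) (a : ℂ) :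
    Bmat n i k * a = (if i = k then a else 0) + (if (i : ℕ) = (k : ℕ) + 1 then -a else 0) := by
  simp only [Bmat, Matrix.of_apply]
  split_ifs with h1 h2
  · exfalso; rw [h1] at h2; omega
  · ring
  · ring
  · ring

lemma Bmul_zero {n : ℕ} (A : Matrix (Fin (n+1)) (Fin (n+1)) ℂ) (j : Fin (n+1)) :
    (Bmat n * A) 0 j = A 0 j := by
  rw [Matrix.mul_apply]
  calc ∑ k, Bmat n 0 k * A k j
      = ∑ k, ((if (0 : Fin (n+1)) = k then A k j else 0)
          + (if ((0 : Fin (n+1)) : ℕ) = (k : ℕ) + 1 then -(A k j) else 0)) := by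
        refine Finset.sum_congr rfl fun k _ => Bsplit n 0 k (A k j)
    _ = A 0 j := by
        rw [Finset.sum_add_distrib, sum_if_eq, sum_if_zero_aux]; ring

lemma Bmul_succ {n : ℕ} (A : Matrix (Fin (n+1)) (Fin (n+1)) ℂ) (i' : Fin n) (j : Fin (n+1)) :
    (Bmat n * A) i'.succ j = A i'.succ j - A i'.castSucc j := by
  rw [Matrix.mul_apply]
  calc ∑ k, Bmat n i'.succ k * A k j
      = ∑ k : Fin (n+1), ((if i'.succ = k then A k j else 0)
          + (if ((i'.succ : Fin (n+1)) : ℕ) = (k : ℕ) + 1 then -(A k j) else 0)) := by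
        refine Finset.sum_congr rfl fun k _ => Bsplit n i'.succ k (A k j)
    _ = A i'.succ j - A i'.castSucc j := by
        rw [Finset.sum_add_distrib, sum_if_eq, sum_if_pred]; ring

lemma mulBT_zero {n : ℕ} (A : Matrix (Fin (n+1)) (Fin (n+1)) ℂ) (i : Fin (n+1)) :
    (A * (Bmat n)ᵀ) i 0 = A i 0 := by
  rw [Matrix.mul_apply]
  calc ∑ k, A i k * (Bmat n)ᵀ k 0
      = ∑ k, ((if (0 : Fin (n+1)) = k then A i k else 0)
          + (if ((0 : Fin (n+1)) : ℕ) = (k : ℕ) + 1 then -(A i k) else 0)) := by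
        refine Finset.sum_congr rfl fun k _ => ?_
        rw [Matrix.transpose_apply, mul_comm]; exact Bsplit n 0 k (A i k)
    _ = A i 0 := by
        rw [Finset.sum_add_distrib, sum_if_eq, sum_if_zero_aux]; ring

lemma mulBT_succ {n : ℕ} (A : Matrix (Fin (n+1)) (Fin (n+1)) ℂ) (i : Fin (n+1)) (j' : Fin n) :
    (A * (Bmat n)ᵀ) i j'.succ = A i j'.succ - A i j'.castSucc := by
  rw [Matrix.mul_apply]
  calc ∑ k, A i k * (Bmat n)ᵀ k j'.succ
      = ∑ k : Fin (n+1), ((if j'.succ = k then A i k else 0)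
          + (if ((j'.succ : Fin (n+1)) : ℕ) = (k : ℕ) + 1 then -(A i k) else 0)) := by
        refine Finset.sum_congr rfl fun k _ => ?_
        rw [Matrix.transpose_apply, mul_comm]; exact Bsplit n j'.succ k (A i k)
    _ = A i j'.succ - A i j'.castSucc := by
        rw [Finset.sum_add_distrib, sum_if_eq, sum_if_pred]; ring

lemma Cmul_zero {n : ℕ} (ρ : ℂ) (A : Matrix (Fin (n+1)) (Fin (n+1)) ℂ) (j : Fin (n+1)) :
    (Cmat ρ n * A) 0 j = A 0 j := by
  rw [Matrix.mul_apply]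
  calc ∑ k, Cmat ρ n 0 k * A k j
      = ∑ k, (if (0 : Fin (n+1)) = k then A k j else 0) := by
        refine Finset.sum_congr rfl fun k _ => ?_
        simp only [Cmat, Matrix.of_apply]
        split_ifs with h1 h2
        · ring
        · exfalso; exact h1 (Fin.ext (by simp [h2]))
        · ring
    _ = A 0 j := sum_if_eq 0 _

lemma Cmul_succ {n : ℕ} (ρ : ℂ) (A : Matrix (Fin (n+1)) (Fin (n+1)) ℂ) (i' : Fin n)
    (j : Fin (n+1)) :
    (Cmat ρ n * A) i'.succ j = A i'.succ j - ρ ^ (i' : ℕ) * (ρ - 1) * A 0 j := by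
  rw [Matrix.mul_apply]
  calc ∑ k, Cmat ρ n i'.succ k * A k j
      = ∑ k : Fin (n+1), ((if i'.succ = k then A k j else 0)
          + (if (0 : Fin (n+1)) = k then -(ρ ^ (i' : ℕ) * (ρ - 1)) * A k j else 0)) := by
        refine Finset.sum_congr rfl fun k _ => ?_
        induction k using Fin.cases with
        | zero =>
            simp only [Cmat, Matrix.of_apply, if_neg (Fin.succ_ne_zero i'), Fin.val_zero,
              if_pos rfl, Fin.val_succ, Nat.add_sub_cancel, if_true]
            ring
        | succ k' =>
            have h0 : ¬((0 : Fin (n+1)) = k'.succ) := fun h => (Fin.succ_ne_zero k') h.symm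
            have h1 : ¬((k'.succ : Fin (n+1)) : ℕ) = 0 := by simp
            simp only [Cmat, Matrix.of_apply, if_neg h0, if_neg h1]
            split_ifs <;> ring
    _ = A i'.succ j - ρ ^ (i' : ℕ) * (ρ - 1) * A 0 j := by
        rw [Finset.sum_add_distrib, sum_if_eq, sum_if_eq]; ring

lemma P_zero (ρ σ : ℂ) : ∀ j, pascalEntry (fun i => ρ ^ i) (fun j => σ ^ j) 0 j = σ ^ j
  | 0 => by simp [pascalEntry]
  | j + 1 => by simp [pascalEntry]

lemma P_col (ρ σ : ℂ) (i : ℕ) :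
    pascalEntry (fun i => ρ ^ i) (fun j => σ ^ j) i 0 = ρ ^ i := by
  cases i <;> simp [pascalEntry]

lemma P_rec (ρ σ : ℂ) (i j : ℕ) :
    pascalEntry (fun i => ρ ^ i) (fun j => σ ^ j) (i + 1) (j + 1)
      = pascalEntry (fun i => ρ ^ i) (fun j => σ ^ j) i (j + 1)
        + pascalEntry (fun i => ρ ^ i) (fun j => σ ^ j) (i + 1) j := by
  simp [pascalEntry]

/-- Explicit entries of `B * R * Bᵀ`. -/
noncomputable def gent (ρ σ x : ℂ) : ℕ → ℕ → ℂ
  | 0, 0 => 1 - x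
  | 0, j + 1 => (1 - x) * σ ^ j * (σ - 1)
  | i + 1, 0 => (1 - x) * ρ ^ i * (ρ - 1)
  | i + 1, j + 1 =>
      pascalEntry (fun i => ρ ^ i) (fun j => σ ^ j) i j
        - x * ((ρ - 1) * (σ - 1)) * ρ ^ i * σ ^ j

lemma M2_apply (ρ σ x : ℂ) (n : ℕ) (i j : Fin (n+1)) :
    (Bmat n * Rm ρ σ x (n+1) * (Bmat n)ᵀ) i j = gent ρ σ x (i : ℕ) (j : ℕ) := by
  induction j using Fin.cases with
  | zero =>
      rw [mulBT_zero]
      induction i using Fin.cases with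
      | zero =>
          rw [Bmul_zero]
          simp only [Rm, Matrix.of_apply, Fin.val_zero, gent]
          rw [P_col]; ring
      | succ i' =>
          rw [Bmul_succ]
          simp only [Rm, Matrix.of_apply, Fin.val_zero, Fin.val_succ, Fin.coe_castSucc, gent]
          rw [P_col, P_col]; ring
  | succ j' =>
      rw [mulBT_succ]
      induction i using Fin.cases with
      | zero =>
          rw [Bmul_zero, Bmul_zero]
          simp only [Rm, Matrix.of_apply, Fin.val_zero, Fin.val_succ, Fin.coe_castSucc]
          rw [P_zero, P_zero]
          have : (j'.succ : ℕ) = (j' : ℕ) + 1 := Fin.val_succ j'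
          simp only [Fin.val_succ, gent]
          ring
      | succ i' =>
          rw [Bmul_succ, Bmul_succ]
          simp only [Rm, Matrix.of_apply, Fin.val_succ, Fin.coe_castSucc, gent]
          rw [P_rec]
          ring

/-- Explicit entries of `C * (B * R * Bᵀ)`. -/
noncomputable def nent (ρ σ x : ℂ) : ℕ → ℕ → ℂ
  | 0, j => gent ρ σ x 0 j
  | _ + 1, 0 => 0
  | i + 1, j + 1 =>
      pascalEntry (fun i => ρ ^ i) (fun j => σ ^ j) i j
        - ((ρ - 1) * (σ - 1)) * ρ ^ i * σ ^ j

lemma N_apply (ρ σ x : ℂ) (n : ℕ) (i j : Fin (n+1)) :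
    (Cmat ρ n * (Bmat n * Rm ρ σ x (n+1) * (Bmat n)ᵀ)) i j = nent ρ σ x (i : ℕ) (j : ℕ) := by
  induction i using Fin.cases with
  | zero =>
      rw [Cmul_zero, M2_apply]
      simp only [Fin.val_zero, nent]
  | succ i' =>
      rw [Cmul_succ, M2_apply, M2_apply]
      induction j using Fin.cases with
      | zero =>
          simp only [Fin.val_zero, Fin.val_succ, gent, nent]
          ring
      | succ j' =>
          simp only [Fin.val_succ, Fin.val_zero, gent, nent]
          ring

lemma key (ρ σ x : ℂ) (n : ℕ) :
    (Rm ρ σ x (n+1)).det = (1 - x) * (Rm ρ σ ((ρ - 1) * (σ - 1)) n).det := by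
  have hdet : (Rm ρ σ x (n+1)).det
      = (Cmat ρ n * (Bmat n * Rm ρ σ x (n+1) * (Bmat n)ᵀ)).det := by
    rw [Matrix.det_mul, Matrix.det_mul, Matrix.det_mul, Matrix.det_transpose,
      Bmat_det, Cmat_det]
    ring
  rw [hdet, Matrix.det_succ_column_zero, Fin.sum_univ_succ]
  have h0 : ∀ i' : Fin n,
      (Cmat ρ n * (Bmat n * Rm ρ σ x (n+1) * (Bmat n)ᵀ)) i'.succ 0 = 0 := by
    intro i'
    rw [N_apply]
    simp [nent]
  have hsum : ∑ i' : Fin n, (-1) ^ ((i'.succ : Fin (n+1)) : ℕ)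
      * (Cmat ρ n * (Bmat n * Rm ρ σ x (n+1) * (Bmat n)ᵀ)) i'.succ 0
      * ((Cmat ρ n * (Bmat n * Rm ρ σ x (n+1) * (Bmat n)ᵀ)).submatrix
          (Fin.succAbove i'.succ) Fin.succ).det = 0 := by
    apply Finset.sum_eq_zero
    intro i' _
    rw [h0]; ring
  rw [hsum]
  have he : (Cmat ρ n * (Bmat n * Rm ρ σ x (n+1) * (Bmat n)ᵀ)) 0 0 = 1 - x := by
    rw [N_apply]; rfl
  have hsub : ((Cmat ρ n * (Bmat n * Rm ρ σ x (n+1) * (Bmat n)ᵀ)).submatrix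
      (Fin.succAbove 0) Fin.succ) = Rm ρ σ ((ρ - 1) * (σ - 1)) n := by
    ext i j
    rw [Matrix.submatrix_apply, Fin.succAbove_zero, N_apply]
    simp only [Fin.val_succ, nent, Rm, Matrix.of_apply]
  rw [he, hsub]
  simp

lemma Rdet (ρ σ : ℂ) (n : ℕ) :
    (Rm ρ σ ((ρ - 1) * (σ - 1)) n).det = (ρ + σ - ρ * σ) ^ n := by
  induction n with
  | zero => simp [Matrix.det_fin_zero]
  | succ m ih =>
      rw [key, ih]
      ring

end PascalGeomAux

/-- for geometric sequences `α_i = ρ^i`, `β_j = σ^j`,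
`det(P_{α,β}(n)) = (ρ + σ - ρσ)^{n-1}`. -/
theorem det_genPascal_geometric (ρ σ : ℂ) (n : ℕ) (hn : 0 < n) :
    (genPascal (fun i => ρ ^ i) (fun j => σ ^ j) n).det = (ρ + σ - ρ * σ) ^ (n - 1) := by
  obtain ⟨m, rfl⟩ : ∃ m, n = m + 1 := ⟨n - 1, by omega⟩
  have hP : genPascal (fun i => ρ ^ i) (fun j => σ ^ j) (m + 1)
      = PascalGeomAux.Rm ρ σ 0 (m + 1) := by
    ext i j
    simp [genPascal, PascalGeomAux.Rm]
  rw [hP, PascalGeomAux.key, PascalGeomAux.Rdet]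
  simp
end

section
/- Let α = (α_i)_{i≥0} and β = (β_i)_{i≥0} be two sequences of complex numbers with α_0 = β_0 = γ. If α is a constant sequence (α_i = γ for all i) or β is a constant sequence (β_i = γ for all i), then for every positive integer n, det(P_{α,β}(n)) = γ^n. -/
open Matrix

/-!
Subtracting from each row of `P_{γ,β}(n + 1)` the row above it turns the first column into
`(γ, 0, …, 0)` and, by the Pascal recurrence, leaves in the lower right block the triangle with
its top row deleted, which is again a generalized Pascal triangle `P_{γ,β'}(n)` (with `β'` the
second row of `P_{γ,β}`). Induction on `n` gives `det = γ ^ n`; the case of constant `β` follows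
by transposition, since `P_{α,β}ᵀ = P_{β,α}` when `α 0 = β 0`.
-/

variable {R : Type*} [CommRing R]

@[simp]
lemma pascalEntry_zero_right (α β : ℕ → R) (i : ℕ) : pascalEntry α β i 0 = α i := by
  cases i <;> simp [pascalEntry]

lemma pascalEntry_succ_succ (α β : ℕ → R) (i j : ℕ) :
    pascalEntry α β (i + 1) (j + 1) = pascalEntry α β i (j + 1) + pascalEntry α β (i + 1) j := by
  simp [pascalEntry]

lemma pascalEntry_swap {α β : ℕ → R} (h₀ : α 0 = β 0) (i j : ℕ) :
    pascalEntry α β i j = pascalEntry β α j i := by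
  induction i generalizing j with
  | zero => cases j <;> simp [pascalEntry, h₀]
  | succ i ih =>
    induction j with
    | zero => simp [pascalEntry]
    | succ j ihj => rw [pascalEntry_succ_succ, pascalEntry_succ_succ, ih, ihj, add_comm]

lemma genPascal_transpose {α β : ℕ → R} (h₀ : α 0 = β 0) (n : ℕ) :
    (genPascal α β n)ᵀ = genPascal β α n := by
  ext i j
  exact pascalEntry_swap h₀ j i

lemma pascalEntry_succ_left (α β : ℕ → R) (i j : ℕ) :
    pascalEntry α β (i + 1) j = pascalEntry (fun i ↦ α (i + 1)) (pascalEntry α β 1) i j := by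
  induction i generalizing j with
  | zero => cases j <;> simp [pascalEntry]
  | succ i ih =>
    induction j with
    | zero => simp
    | succ j ihj => rw [pascalEntry_succ_succ, ih, ihj, pascalEntry_succ_succ]

lemma det_genPascal_const_left_succ (γ : R) (β : ℕ → R) (n : ℕ) :
    (genPascal (fun _ ↦ γ) β (n + 1)).det =
      γ * (genPascal (fun _ ↦ γ) (pascalEntry (fun _ ↦ γ) β 1) n).det := by
  set P := genPascal (fun _ ↦ γ) β (n + 1)
  let D : Matrix (Fin (n + 1)) (Fin (n + 1)) R :=
    Matrix.of (Fin.cases (P 0) fun i j ↦ P i.succ j - P i.castSucc j)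
  have hD : P.det = D.det :=
    det_eq_of_forall_row_eq_smul_add_pred (fun _ ↦ 1) (fun _ ↦ rfl) fun i j ↦ by simp [D]
  have hcol : ∀ i : Fin n, D i.succ 0 = 0 := fun i ↦ by simp [D, P, genPascal]
  have hblock : D.submatrix Fin.succ Fin.succ =
      genPascal (fun _ ↦ γ) (pascalEntry (fun _ ↦ γ) β 1) n := by
    ext i j
    simp only [D, P, genPascal, submatrix_apply, of_apply, Fin.cases_succ, Fin.val_succ,
      Fin.val_castSucc]
    rw [pascalEntry_succ_succ, add_sub_cancel_left, pascalEntry_succ_left]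
  have hcorner : D 0 0 = γ := by simp [D, P, genPascal]
  rw [hD, det_succ_column_zero, Fin.sum_univ_succ]
  simp only [hcol, mul_zero, zero_mul, Finset.sum_const_zero, add_zero, Fin.val_zero, pow_zero,
    one_mul, Fin.succAbove_zero, hcorner, hblock]

lemma det_genPascal_const_left (γ : R) (β : ℕ → R) (n : ℕ) :
    (genPascal (fun _ ↦ γ) β n).det = γ ^ n := by
  induction n generalizing β with
  | zero => simp
  | succ n ih => rw [det_genPascal_const_left_succ, ih, pow_succ']

theorem det_genPascal_constant_general (α β : ℕ → ℂ) (γ : ℂ) (hα : α 0 = γ)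
    (hconst : (∀ i, α i = γ) ∨ (∀ i, β i = γ)) (n : ℕ) :
    (genPascal α β n).det = γ ^ n := by
  rcases hconst with hα_const | hβ_const
  · rw [show α = fun _ ↦ γ from funext hα_const, det_genPascal_const_left]
  · rw [show β = fun _ ↦ γ from funext hβ_const, ← genPascal_transpose hα.symm,
      det_transpose, det_genPascal_const_left]

/-- if `α` or `β` is the constant sequence `γ` (with `α_0 = β_0 = γ`),
then `det(P_{α,β}(n)) = γ^n`. -/
theorem det_genPascal_constant (α β : ℕ → ℂ) (γ : ℂ) (hα : α 0 = γ) (hβ : β 0 = γ)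
    (hconst : (∀ i, α i = γ) ∨ (∀ i, β i = γ)) (n : ℕ) (hn : 0 < n) :
    (genPascal α β n).det = γ ^ n :=
  det_genPascal_constant_general α β γ hα hconst n
end
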